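/- Let (X, ρ) be a metric space, λ ∈ Δ∞, and x = (x_k)_{k∈ℕ} a sequence in X. If x is λ-statistically bounded, i.e., there exists a compact subset C of X such that the set {k ∈ ℕ : x_k ∉ C} has λ-density zero, then the set Γ_x(λ) of λ-statistical cluster points of x is nonempty and compact. (This is the paper's Theorem 4.7, specialized to the PM space induced by a metric, where F_{xy} = ε_{ρ(x,y)} and the strong topology is the metric topology.) -/

import Mathlib

open Filter Topology

/-- `l` belongs to the class `Δ∞`: a nondecreasing (for indices `≥ 1`) sequence of
positive reals tending to `∞` with `l 1 = 1` and `l (n+1) ≤ l n + 1`. -/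
def DeltaInfty (l : ℕ → ℝ) : Prop :=
  (∀ n, 1 ≤ n → 0 < l n) ∧ (∀ m n, 1 ≤ m → m ≤ n → l m ≤ l n) ∧
    Tendsto l atTop atTop ∧ l 1 = 1 ∧ ∀ n, 1 ≤ n → l (n + 1) ≤ l n + 1

open Classical in
/-- The number of elements of `M` in the window `I_n = [n - l n + 1, n] ∩ ℕ`. -/
noncomputable def lamCount (l : ℕ → ℝ) (M : Set ℕ) (n : ℕ) : ℕ :=
  ((Finset.Icc 1 n).filter (fun (k : ℕ) => ((n : ℝ) - l n + 1 ≤ (k : ℝ)) ∧ k ∈ M)).card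

/-- `M ⊆ ℕ` has `λ`-density `r`: `|{k ∈ I_n : k ∈ M}| / l n → r`. -/
def lamDensity (l : ℕ → ℝ) (M : Set ℕ) (r : ℝ) : Prop :=
  Tendsto (fun n => (lamCount l M n : ℝ) / l n) atTop (𝓝 r)

/-- `Y` is a `λ`-statistical cluster point of `x`: for every `t > 0` the set
`{k : dist (x k) Y < t}` does not have `λ`-density zero. -/
def LamStatClusterPt {X : Type*} [MetricSpace X] (l : ℕ → ℝ) (x : ℕ → X) (Y : X) : Prop :=
  ∀ t > 0, ¬ lamDensity l {k | dist (x k) Y < t} 0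

/-!
The sets of `λ`-density zero form an ideal of subsets of `ℕ`, so their complements form a filter,
and the `λ`-statistical cluster points of `x` are exactly the cluster points of `x` along it. Since
`I_n` has at least `λ n - 1` elements, `ℕ` itself has `λ`-density one and the filter is proper.
`λ`-statistical boundedness says that the compact set `C` belongs to the image of this filter
under `x`, so the cluster points form a nonempty closed subset of `C`.
-/

theorem DeltaInfty.apply_le {l : ℕ → ℝ} (hl : DeltaInfty l) {n : ℕ} (hn : 1 ≤ n) : l n ≤ n := by
  induction n, hn using Nat.le_induction with
  | base => simp [hl.2.2.2.1]
  | succ m hm ih =>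
    push_cast
    linarith [hl.2.2.2.2 m hm]

theorem lamCount_mono (l : ℕ → ℝ) {M N : Set ℕ} (h : M ⊆ N) (n : ℕ) :
    lamCount l M n ≤ lamCount l N n :=
  Finset.card_le_card fun _ hk => by
    simp only [Finset.mem_filter] at hk ⊢
    exact ⟨hk.1, hk.2.1, h hk.2.2⟩

theorem lamCount_union_le (l : ℕ → ℝ) (M N : Set ℕ) (n : ℕ) :
    lamCount l (M ∪ N) n ≤ lamCount l M n + lamCount l N n := by
  refine (Finset.card_le_card fun k hk => ?_).trans (Finset.card_union_le _ _)
  simp only [Finset.mem_filter, Finset.mem_union, Set.mem_union] at hk ⊢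
  tauto

theorem lamCount_empty (l : ℕ → ℝ) (n : ℕ) : lamCount l ∅ n = 0 := by
  simp [lamCount]

/-- The last `⌊l n⌋₊` integers up to `n` lie in the window `I_n`. -/
theorem sub_one_le_lamCount_univ {l : ℕ → ℝ} {n : ℕ} (hn : l n ≤ n) :
    l n - 1 ≤ lamCount l Set.univ n := by
  rcases lt_or_ge (l n) 0 with hneg | hnonneg
  · linarith [(lamCount l Set.univ n).cast_nonneg (α := ℝ)]
  set m := ⌊l n⌋₊
  have hm : (m : ℝ) ≤ l n := Nat.floor_le hnonneg
  have hmn : m ≤ n := by exact_mod_cast hm.trans hn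
  have hcount : m ≤ lamCount l Set.univ n := by
    calc m = (Finset.Icc (n - m + 1) n).card := by rw [Nat.card_Icc]; omega
      _ ≤ _ := Finset.card_le_card fun k hk => by
        rw [Finset.mem_Icc] at hk
        have hk' : ((n - m + 1 : ℕ) : ℝ) ≤ k := by exact_mod_cast hk.1
        push_cast [Nat.cast_sub hmn] at hk'
        simp only [Finset.mem_filter, Finset.mem_Icc, Set.mem_univ, and_true]
        exact ⟨⟨by omega, hk.2⟩, by linarith⟩
  have : (m : ℝ) ≤ lamCount l Set.univ n := by exact_mod_cast hcount
  linarith [Nat.lt_floor_add_one (l n)]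

section DensityZero

variable {l : ℕ → ℝ} {M N : Set ℕ}

theorem lamDensity_zero_mono (h : M ⊆ N) (hN : lamDensity l N 0) : lamDensity l M 0 := by
  refine squeeze_zero_norm (fun n => ?_) (by simpa using hN.norm)
  simp only [norm_div, Real.norm_natCast]
  exact div_le_div_of_nonneg_right (by exact_mod_cast lamCount_mono l h n) (norm_nonneg _)

theorem lamDensity_zero_union (hM : lamDensity l M 0) (hN : lamDensity l N 0) :
    lamDensity l (M ∪ N) 0 := by
  refine squeeze_zero_norm (fun n => ?_) (by simpa using hM.norm.add hN.norm)
  simp only [norm_div, Real.norm_natCast, ← add_div]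
  exact div_le_div_of_nonneg_right (by exact_mod_cast lamCount_union_le l M N n) (norm_nonneg _)

variable (l) in
theorem lamDensity_empty : lamDensity l ∅ 0 := by
  simp [lamDensity, lamCount_empty]

theorem not_lamDensity_univ_zero (hl : Tendsto l atTop atTop) (hle : ∀ᶠ n in atTop, l n ≤ n) :
    ¬ lamDensity l Set.univ 0 := by
  intro h
  have hone : Tendsto (fun n => 1 - (l n)⁻¹) atTop (𝓝 1) := by
    simpa using tendsto_const_nhds.sub hl.inv_tendsto_atTop
  have hle_count : ∀ᶠ n in atTop, 1 - (l n)⁻¹ ≤ lamCount l Set.univ n / l n := by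
    filter_upwards [hle, hl.eventually_gt_atTop 0] with n hn hpos
    calc 1 - (l n)⁻¹ = (l n - 1) / l n := by field_simp
      _ ≤ _ := by gcongr; exact sub_one_le_lamCount_univ hn
  linarith [le_of_tendsto_of_tendsto hone h hle_count]

end DensityZero

def lamFilter (l : ℕ → ℝ) : Filter ℕ :=
  Filter.comk (lamDensity l · 0) (lamDensity_empty l) (fun _ hN _ h => lamDensity_zero_mono h hN)
    (fun _ hM _ hN => lamDensity_zero_union hM hN)

theorem compl_mem_lamFilter {l : ℕ → ℝ} {M : Set ℕ} : Mᶜ ∈ lamFilter l ↔ lamDensity l M 0 := by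
  simp [lamFilter]

theorem frequently_lamFilter {l : ℕ → ℝ} {p : ℕ → Prop} :
    (∃ᶠ k in lamFilter l, p k) ↔ ¬ lamDensity l {k | p k} 0 := by
  simp [Filter.Frequently, Filter.Eventually, lamFilter, Set.compl_ofPred]

theorem lamFilter_neBot {l : ℕ → ℝ} (hl : Tendsto l atTop atTop)
    (hle : ∀ᶠ n in atTop, l n ≤ n) : (lamFilter l).NeBot :=
  frequently_true_iff_neBot _ |>.1 <| frequently_lamFilter.2 <| by
    simpa using not_lamDensity_univ_zero hl hle

theorem lamStatClusterPt_iff_mapClusterPt {X : Type*} [MetricSpace X] {l : ℕ → ℝ} {x : ℕ → X}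
    {Y : X} : LamStatClusterPt l x Y ↔ MapClusterPt Y (lamFilter l) x := by
  simp only [LamStatClusterPt, Metric.nhds_basis_ball.mapClusterPt_iff_frequently,
    frequently_lamFilter, Metric.mem_ball]

theorem IsCompact.isCompact_setOf_clusterPt {X : Type*} [TopologicalSpace X] [T2Space X]
    {f : Filter X} {K : Set X} (hK : IsCompact K) (hKf : K ∈ f) :
    IsCompact {Y | ClusterPt Y f} :=
  hK.of_isClosed_subset isClosed_setOfPred_clusterPt fun _ hY =>
    hK.isClosed.closure_subset (hY.mem_closure_of_mem _ hKf)

theorem lamStatClusterPts_nonempty_and_compact {X : Type*} [MetricSpace X]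
    (l : ℕ → ℝ) (hl : DeltaInfty l) (x : ℕ → X)
    (hbdd : ∃ C : Set X, IsCompact C ∧ lamDensity l {k | x k ∉ C} 0) :
    {Y | LamStatClusterPt l x Y}.Nonempty ∧ IsCompact {Y | LamStatClusterPt l x Y} := by
  obtain ⟨C, hC, hxC⟩ := hbdd
  have := lamFilter_neBot hl.2.2.1 (eventually_atTop.2 ⟨1, fun _ hn => hl.apply_le hn⟩)
  have hCmem : C ∈ map x (lamFilter l) := by
    rw [mem_map, ← compl_compl (x ⁻¹' C)]
    exact compl_mem_lamFilter.2 hxC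
  have hΓ : {Y | LamStatClusterPt l x Y} = {Y | MapClusterPt Y (lamFilter l) x} :=
    Set.ext fun _ => lamStatClusterPt_iff_mapClusterPt
  rw [hΓ]
  exact ⟨(hC.exists_clusterPt (le_principal_iff.2 hCmem)).imp fun _ => And.right,
    hC.isCompact_setOf_clusterPt hCmem⟩
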